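/- (Sum rule at infinity.) Let F₁, F₂ : ℝ^n ⇉ ℝ^m be set-valued mappings with closed graphs, let F := F₁ + F₂ and ȳ ∈ J(F). Assume: (a) (boundedness) there exist constants R > 0, ρ > 0 and a neighborhood V of ȳ such that whenever ‖x‖ > R, y₁ ∈ F₁(x), y₂ ∈ F₂(x) and y₁ + y₂ ∈ V, one has ‖y₁‖ < ρ and ‖y₂‖ < ρ; (b) (constraint qualification) for every (y₁, y₂) ∈ J⁺(F₁ + F₂, ȳ) one has D*F₁(∞, y₁)(0) ∩ (−D*F₂(∞, y₂)(0)) = {0}. Then gph F is locally closed at (∞, ȳ), and for all v ∈ ℝ^m, D*F(∞, ȳ)(v) ⊆ ⋃_{(ȳ₁,ȳ₂) ∈ J⁺(F₁+F₂,ȳ)} [ D*F₁(∞, ȳ₁)(v) + D*F₂(∞, ȳ₂)(v) ]. -/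

import Mathlib

open Filter Topology Set Metric Pointwise
open scoped RealInnerProductSpace ENNReal

noncomputable section

variable {E F G : Type*}
  [NormedAddCommGroup E] [InnerProductSpace ℝ E]
  [NormedAddCommGroup F] [InnerProductSpace ℝ F]
  [NormedAddCommGroup G] [InnerProductSpace ℝ G]

/-- The regular (Fréchet) normal cone to a subset of a product of inner product
spaces, at a point `p` (empty if `p ∉ Ω`). -/
def frechetNormalCone2 (Ω : Set (E × F)) (p : E × F) : Set (E × F) :=
  {ξ | p ∈ Ω ∧ ∀ ε > (0:ℝ), ∀ᶠ q in nhdsWithin p Ω,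
      ⟪ξ.1, q.1 - p.1⟫ + ⟪ξ.2, q.2 - p.2⟫ ≤ ε * ‖q - p‖}

/-- The limiting (Mordukhovich) normal cone. -/
def limitingNormalCone2 (Ω : Set (E × F)) (p : E × F) : Set (E × F) :=
  {ξ | ∃ pk : ℕ → E × F, ∃ ξk : ℕ → E × F,
    (∀ k, pk k ∈ Ω) ∧ Tendsto pk atTop (𝓝 p) ∧
    (∀ k, ξk k ∈ frechetNormalCone2 Ω (pk k)) ∧ Tendsto ξk atTop (𝓝 ξ)}

/-- The normal cone to `Ω ⊆ E × F` at `(∞, ȳ)`. -/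
def normalConeAtInfty (Ω : Set (E × F)) (ybar : F) : Set (E × F) :=
  {ξ | ∃ pk : ℕ → E × F, ∃ ξk : ℕ → E × F,
    (∀ k, pk k ∈ Ω) ∧ Tendsto (fun k => ‖(pk k).1‖) atTop atTop ∧
    Tendsto (fun k => (pk k).2) atTop (𝓝 ybar) ∧
    (∀ k, ξk k ∈ frechetNormalCone2 Ω (pk k)) ∧ Tendsto ξk atTop (𝓝 ξ)}

/-- `Ω ⊆ E × F` is locally closed at `(∞, ȳ)`. -/
def LocallyClosedAtInfty (Ω : Set (E × F)) (ybar : F) : Prop :=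
  ∃ R > (0:ℝ), ∃ V ∈ 𝓝 ybar, IsClosed V ∧
    IsClosed (Ω ∩ {p : E × F | R ≤ ‖p.1‖ ∧ p.2 ∈ V})

/-- Graph of a set-valued mapping. -/
def svGraph (S : E → Set F) : Set (E × F) := {p | p.2 ∈ S p.1}

/-- Jelonek set of a set-valued mapping. -/
def jelonek (S : E → Set F) : Set F :=
  {y | ∃ xk : ℕ → E, ∃ yk : ℕ → F,
    Tendsto (fun k => ‖xk k‖) atTop atTop ∧ (∀ k, yk k ∈ S (xk k)) ∧
    Tendsto yk atTop (𝓝 y)}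

/-- Coderivative of a set-valued mapping at a point of its graph. -/
def coderiv (S : E → Set F) (x : E) (y : F) (v : F) : Set E :=
  {u | (u, -v) ∈ limitingNormalCone2 (svGraph S) (x, y)}

/-- Coderivative of a set-valued mapping at `(∞, ȳ)`. -/
def coderivAtInfty (S : E → Set F) (ybar : F) (v : F) : Set E :=
  {u | (u, -v) ∈ normalConeAtInfty (svGraph S) ybar}

/-- Regular normal cone, one-space version. -/
def frechetNormalCone1 (Ω : Set E) (x : E) : Set E :=
  {ξ | x ∈ Ω ∧ ∀ ε > (0:ℝ), ∀ᶠ x' in nhdsWithin x Ω, ⟪ξ, x' - x⟫ ≤ ε * ‖x' - x‖}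

/-- Normal cone at infinity to an unbounded subset of `E`. -/
def normalConeAtInfty1 (Ω : Set E) : Set E :=
  {ξ | ∃ xk : ℕ → E, ∃ ξk : ℕ → E, (∀ k, xk k ∈ Ω) ∧
    Tendsto (fun k => ‖xk k‖) atTop atTop ∧
    (∀ k, ξk k ∈ frechetNormalCone1 Ω (xk k)) ∧ Tendsto ξk atTop (𝓝 ξ)}

/-- Epigraph of an extended-real-valued function. -/
def epiSet (f : E → EReal) : Set (E × ℝ) := {p | f p.1 ≤ (p.2 : EReal)}

/-- Graph of an extended-real-valued function, as a subset of `E × ℝ`. -/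
def gphFun (f : E → EReal) : Set (E × ℝ) := {p | f p.1 = (p.2 : EReal)}

/-- Jelonek set of a function. -/
def jelonekFun (f : E → EReal) : Set ℝ :=
  {y | ∃ xk : ℕ → E, Tendsto (fun k => ‖xk k‖) atTop atTop ∧
    Tendsto (fun k => f (xk k)) atTop (𝓝 (y : EReal))}

/-- Limiting subdifferential of `f` at `x` (empty outside `dom f`). -/
def limSubdiff (f : E → EReal) (x : E) : Set E :=
  {u | ∃ r : ℝ, f x = (r : EReal) ∧
    (u, (-1 : ℝ)) ∈ limitingNormalCone2 (epiSet f) (x, r)}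

/-- Limiting subdifferential of `f` at `(∞, ȳ)`. -/
def limSubdiffAtInfty (f : E → EReal) (ybar : ℝ) : Set E :=
  {u | (u, (-1 : ℝ)) ∈ normalConeAtInfty (epiSet f) ybar}

/-- Singular subdifferential of `f` at `(∞, ȳ)`. -/
def singSubdiffAtInfty (f : E → EReal) (ybar : ℝ) : Set E :=
  {u | (u, (0 : ℝ)) ∈ normalConeAtInfty (epiSet f) ybar}

/-- Inverse of a set-valued mapping. -/
def svInv (S : E → Set F) (y : F) : Set E := {x | y ∈ S x}

/-- Preimage `F⁻¹(V) = {x : F(x) ∩ V ≠ ∅}`. -/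
def svPreimage (S : E → Set F) (V : Set F) : Set E := {x | (S x ∩ V).Nonempty}

/-- Distance function of a set-valued mapping, with value `+∞` on empty values. -/
def dSV (S : E → Set F) (p : E × F) : EReal :=
  ((EMetric.infEdist p.2 (S p.1) : ℝ≥0∞) : EReal)

/-- Regular normal cone on `(E × F) × ℝ`. -/
def frechetNormalCone3 (Ω : Set ((E × F) × ℝ)) (p : (E × F) × ℝ) : Set ((E × F) × ℝ) :=
  {ξ | p ∈ Ω ∧ ∀ ε > (0:ℝ), ∀ᶠ q in nhdsWithin p Ω,
      ⟪ξ.1.1, q.1.1 - p.1.1⟫ + ⟪ξ.1.2, q.1.2 - p.1.2⟫ + ξ.2 * (q.2 - p.2)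
        ≤ ε * ‖q - p‖}

/-- Limiting normal cone on `(E × F) × ℝ`. -/
def limitingNormalCone3 (Ω : Set ((E × F) × ℝ)) (p : (E × F) × ℝ) : Set ((E × F) × ℝ) :=
  {ξ | ∃ pk ξk : ℕ → (E × F) × ℝ, (∀ k, pk k ∈ Ω) ∧ Tendsto pk atTop (𝓝 p) ∧
    (∀ k, ξk k ∈ frechetNormalCone3 Ω (pk k)) ∧ Tendsto ξk atTop (𝓝 ξ)}

/-- Limiting subdifferential of the distance function `d_F`. -/
def limSubdiffD (S : E → Set F) (p : E × F) : Set (E × F) :=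
  {w | ∃ r : ℝ, dSV S p = (r : EReal) ∧
    (w, (-1 : ℝ)) ∈ limitingNormalCone3 {q : (E × F) × ℝ | dSV S q.1 ≤ (q.2 : EReal)} (p, r)}

/-- The set `J⁺(F₁ + F₂, y)`. -/
def jplus (S₁ S₂ : E → Set F) (y : F) : Set (F × F) :=
  {q | ∃ xk : ℕ → E, ∃ y1k y2k : ℕ → F,
    Tendsto (fun k => ‖xk k‖) atTop atTop ∧
    (∀ k, y1k k ∈ S₁ (xk k)) ∧ (∀ k, y2k k ∈ S₂ (xk k)) ∧
    Tendsto y1k atTop (𝓝 q.1) ∧ Tendsto y2k atTop (𝓝 q.2) ∧ q.1 + q.2 = y}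

/-- The set `J°(F₂ ∘ F₁, y)`. -/
def jcirc (S₁ : E → Set G) (S₂ : G → Set F) (y : F) : Set G :=
  {z | ∃ xk : ℕ → E, ∃ zk : ℕ → G, ∃ yk : ℕ → F,
    Tendsto (fun k => ‖xk k‖) atTop atTop ∧ (∀ k, zk k ∈ S₁ (xk k)) ∧
    (∀ k, yk k ∈ S₂ (zk k)) ∧ Tendsto zk atTop (𝓝 z) ∧ Tendsto yk atTop (𝓝 y)}

/-- Composition `F₂ ∘ F₁` of set-valued mappings. -/
def svComp (S₂ : G → Set F) (S₁ : E → Set G) (x : E) : Set F :=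
  {y | ∃ z ∈ S₁ x, y ∈ S₂ z}

abbrev Eucl (n : ℕ) := EuclideanSpace ℝ (Fin n)

/-! Lift to the Euclidean triple space `E × F × F`, where the graph of `F₁ + F₂` is the image of
`Ω₁ ∩ Ω₂` with `Ω₁ = {(x, y₁, y₂) | y₁ ∈ F₁ x}` and `Ω₂ = {(x, y₁, y₂) | y₂ ∈ F₂ x}`. A Fréchet
normal `(u, w)` to the sum graph lifts to the Fréchet normal `(u, w, w)` of `Ω₁ ∩ Ω₂`, and the fuzzy
intersection rule (minimize `-⟪ξ, a - p⟫ + κ/2 ‖a - b‖² + C/2 ‖a - p‖²` over `Ω₁ × Ω₂` near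
`(p, p)` and let `κ → ∞`) splits it, up to `ε`, into Fréchet normals to the graphs of `F₁` and `F₂`
at nearby points.

Along a sequence escaping to `(∞, ȳ)` the boundedness assumption lets the `y₁`- and
`y₂`-components converge, to a point of `J⁺(F₁ + F₂, ȳ)`. The approximate normals then converge to
the claimed decomposition as long as their `x`-parts stay bounded; otherwise normalizing them
produces a unit vector in `D*F₁(∞, ȳ₁)(0) ∩ -D*F₂(∞, ȳ₂)(0)`, which the qualification condition
forbids. Local closedness is the same compactness argument applied to a convergent sequence in the
graph. -/

section Sequences

variable {ι V : Type*} [SeminormedAddCommGroup V] {l : Filter ι} {a b : ι → V} {ε : ι → ℝ}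

theorem tendsto_of_norm_sub_le (h : ∀ i, ‖a i - b i‖ ≤ ε i) (hε : Tendsto ε l (𝓝 0)) {L : V}
    (hb : Tendsto b l (𝓝 L)) : Tendsto a l (𝓝 L) := by
  simpa using (squeeze_zero_norm h hε).add hb

theorem tendsto_norm_atTop_of_norm_sub_le (h : ∀ i, ‖a i - b i‖ ≤ ε i)
    (hε : Tendsto ε l (𝓝 0)) (hb : Tendsto (fun i => ‖b i‖) l atTop) :
    Tendsto (fun i => ‖a i‖) l atTop := by
  refine tendsto_atTop_mono (fun i => ?_) (hb.atTop_add hε.neg)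
  have := norm_sub_norm_le (b i) (a i)
  rw [norm_sub_rev] at this
  linarith [h i]

end Sequences

section BoundedSum

variable {X Y : Type*} [NormedAddCommGroup X] [NormedAddCommGroup Y] [ProperSpace Y]

theorem exists_subseq_tendsto_of_add_mem {S₁ S₂ : X → Set Y} {R ρ : ℝ} {V : Set Y}
    (hbdd : ∀ (x : X) (y₁ y₂ : Y), R < ‖x‖ → y₁ ∈ S₁ x → y₂ ∈ S₂ x → y₁ + y₂ ∈ V →
      ‖y₁‖ < ρ ∧ ‖y₂‖ < ρ)
    {x : ℕ → X} {A B : ℕ → Y} (hA : ∀ k, A k ∈ S₁ (x k)) (hB : ∀ k, B k ∈ S₂ (x k))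
    (h : ∀ᶠ k in atTop, R < ‖x k‖ ∧ A k + B k ∈ V) :
    ∃ z : Y × Y, ∃ φ : ℕ → ℕ, StrictMono φ ∧ Tendsto (fun i => (A (φ i), B (φ i))) atTop (𝓝 z) := by
  have hmem : ∀ᶠ k in atTop, (A k, B k) ∈ closedBall (0 : Y × Y) ρ := h.mono fun k hk => by
    have := hbdd _ _ _ hk.1 (hA k) (hB k) hk.2
    rw [mem_closedBall_zero_iff, norm_prod_le_iff]
    exact ⟨this.1.le, this.2.le⟩
  obtain ⟨z, -, φ, hφ, hz⟩ := (isCompact_closedBall _ _).tendsto_subseq' hmem.frequently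
  exact ⟨z, φ, hφ, hz⟩

theorem locallyClosedAtInfty_svGraph_add {S₁ S₂ : X → Set Y} (h₁ : IsClosed (svGraph S₁))
    (h₂ : IsClosed (svGraph S₂)) {ybar : Y} {R ρ : ℝ} {V : Set Y} (hV : V ∈ 𝓝 ybar)
    (hbdd : ∀ (x : X) (y₁ y₂ : Y), R < ‖x‖ → y₁ ∈ S₁ x → y₂ ∈ S₂ x → y₁ + y₂ ∈ V →
      ‖y₁‖ < ρ ∧ ‖y₂‖ < ρ) :
    LocallyClosedAtInfty (svGraph fun x => S₁ x + S₂ x) ybar := by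
  obtain ⟨δ, hδ, hδV⟩ := Metric.nhds_basis_closedBall.mem_iff.1 hV
  refine ⟨|R| + 1, by positivity, closedBall ybar δ, closedBall_mem_nhds _ hδ,
    isClosed_closedBall, IsSeqClosed.isClosed fun f p hf hlim => ?_⟩
  choose A hA B hB hAB using fun k => Set.mem_add.1 (hf k).1
  have hR (k : ℕ) : R < ‖(f k).1‖ := (le_abs_self R).trans_lt (by linarith [(hf k).2.1])
  obtain ⟨⟨w₁, w₂⟩, φ, hφ, hw⟩ := exists_subseq_tendsto_of_add_mem hbdd hA hB
    (Eventually.of_forall fun k => ⟨hR k, (hAB k).symm ▸ hδV (hf k).2.2⟩)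
  have hx := hlim.fst_nhds.comp hφ.tendsto_atTop
  have hy := hlim.snd_nhds.comp hφ.tendsto_atTop
  refine ⟨⟨w₁, h₁.mem_of_tendsto (hx.prodMk_nhds hw.fst_nhds) (Eventually.of_forall fun i => hA _),
    w₂, h₂.mem_of_tendsto (hx.prodMk_nhds hw.snd_nhds) (Eventually.of_forall fun i => hB _),
    tendsto_nhds_unique ((hw.fst_nhds.add hw.snd_nhds).congr fun i => hAB _) hy⟩,
    ge_of_tendsto hx.norm (Eventually.of_forall fun i => (hf _).2.1),
    isClosed_closedBall.mem_of_tendsto hy (Eventually.of_forall fun i => (hf _).2.2)⟩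

end BoundedSum

section FrechetNormal

variable {V W : Type*} [SeminormedAddCommGroup V] [SeminormedAddCommGroup W]

/-- Stated for an arbitrary functional `ℓ`, so that `frechetNormalCone2` (sup norm on `E × F`)
and the Fréchet normal cone of an inner product space are both instances. -/
def IsFrechetNormalAt (Ω : Set V) (p : V) (ℓ : V → ℝ) : Prop :=
  ∀ ε > (0:ℝ), ∀ᶠ q in 𝓝[Ω] p, ℓ (q - p) ≤ ε * ‖q - p‖

theorem IsFrechetNormalAt.comp {Ω : Set V} {Ω' : Set W} {p : V} {g : V → W} {ℓ : W → ℝ}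
    {ℓ' : V → ℝ} {C : ℝ} (h : IsFrechetNormalAt Ω' (g p) ℓ) (hΩ : MapsTo g Ω Ω')
    (hC : ∀ q, ‖g q - g p‖ ≤ C * ‖q - p‖) (hℓ : ∀ q, ℓ' (q - p) = ℓ (g q - g p)) :
    IsFrechetNormalAt Ω p ℓ' := by
  have hcont : Tendsto g (𝓝 p) (𝓝 (g p)) := by
    rw [tendsto_iff_norm_sub_tendsto_zero]
    refine squeeze_zero (fun _ => norm_nonneg _) hC ?_
    simpa using (tendsto_norm_sub_self p).const_mul C
  have htend : Tendsto g (𝓝[Ω] p) (𝓝[Ω'] (g p)) :=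
    tendsto_nhdsWithin_iff.2 ⟨hcont.mono_left nhdsWithin_le_nhds,
      eventually_mem_nhdsWithin.mono fun q hq => hΩ hq⟩
  intro ε hε
  have hε' : 0 < ε / (|C| + 1) := by positivity
  have hεC : ε / (|C| + 1) * C ≤ ε := by
    rw [div_mul_eq_mul_div, div_le_iff₀ (by positivity)]
    nlinarith [le_abs_self C]
  filter_upwards [htend.eventually (h _ hε')] with q hq
  rw [hℓ]
  calc ℓ (g q - g p) ≤ ε / (|C| + 1) * ‖g q - g p‖ := hq
    _ ≤ ε / (|C| + 1) * (C * ‖q - p‖) := by gcongr; exact hC q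
    _ ≤ ε * ‖q - p‖ := by rw [← mul_assoc]; gcongr

theorem mem_frechetNormalCone2_iff {Ω : Set (E × F)} {p ξ : E × F} :
    ξ ∈ frechetNormalCone2 Ω p ↔
      p ∈ Ω ∧ IsFrechetNormalAt Ω p (fun z => ⟪ξ.1, z.1⟫ + ⟪ξ.2, z.2⟫) :=
  Iff.rfl

end FrechetNormal

section InnerProductSpace

variable {H : Type*} [NormedAddCommGroup H] [InnerProductSpace ℝ H] {Ω : Set H} {p ξ : H}

def frechetNormalCone (Ω : Set H) (p : H) : Set H :=
  {ξ | p ∈ Ω ∧ IsFrechetNormalAt Ω p (inner ℝ ξ)}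

theorem mem_frechetNormalCone_of_inner_le_sq (hp : p ∈ Ω) {M : ℝ}
    (h : ∀ᶠ q in 𝓝[Ω] p, ⟪ξ, q - p⟫ ≤ M * ‖q - p‖ ^ 2) : ξ ∈ frechetNormalCone Ω p := by
  refine ⟨hp, fun ε hε => ?_⟩
  have hnear : ∀ᶠ q in 𝓝[Ω] p, q ∈ Metric.ball p (ε / (|M| + 1)) :=
    nhdsWithin_le_nhds (Metric.ball_mem_nhds p (by positivity))
  filter_upwards [h, hnear] with q hq hq'
  rw [mem_ball_iff_norm] at hq'
  have hM : |M| * ‖q - p‖ ≤ ε := by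
    rw [lt_div_iff₀ (by positivity)] at hq'
    nlinarith [abs_nonneg M, norm_nonneg (q - p)]
  nlinarith [le_abs_self M, norm_nonneg (q - p)]

theorem inner_eq_zero_of_mem_frechetNormalCone (hξ : ξ ∈ frechetNormalCone Ω p) {d : H}
    (hd : ∀ t : ℝ, p + t • d ∈ Ω) : ⟪ξ, d⟫ = 0 := by
  suffices key : ∀ d : H, (∀ t : ℝ, p + t • d ∈ Ω) → ⟪ξ, d⟫ ≤ 0 by
    have := key (-d) fun t => by simpa using hd (-t)
    rw [inner_neg_right] at this
    exact le_antisymm (key d hd) (by linarith)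
  intro d hd
  have hc : Continuous fun t : ℝ => p + t • d := by fun_prop
  have hcurve : Tendsto (fun t : ℝ => p + t • d) (𝓝[>] 0) (𝓝[Ω] p) :=
    tendsto_nhdsWithin_iff.2
      ⟨(hc.tendsto' 0 p (by simp)).mono_left nhdsWithin_le_nhds, Eventually.of_forall hd⟩
  have hle : ∀ ε > (0:ℝ), ⟪ξ, d⟫ ≤ ε * ‖d‖ := by
    intro ε hε
    obtain ⟨t, ht, htpos⟩ :=
      ((hcurve.eventually (hξ.2 ε hε)).and self_mem_nhdsWithin).exists
    simp only [add_sub_cancel_left, inner_smul_right, norm_smul, Real.norm_eq_abs,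
      abs_of_pos (htpos : (0:ℝ) < t)] at ht
    nlinarith
  by_contra! hpos
  have := hle (⟪ξ, d⟫ / (2 * (‖d‖ + 1))) (by positivity)
  rw [div_mul_eq_mul_div, le_div_iff₀ (by positivity)] at this
  nlinarith [norm_nonneg d]

end InnerProductSpace

section FuzzyIntersection

variable {H : Type*} [NormedAddCommGroup H] [InnerProductSpace ℝ H] {Ω₁ Ω₂ : Set H}

def penalty (ξ p : H) (C κ : ℝ) (z : H × H) : ℝ :=
  -⟪ξ, z.1 - p⟫ + κ / 2 * ‖z.1 - z.2‖ ^ 2 + C / 2 * ‖z.1 - p‖ ^ 2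

variable {ξ p a b : H} {C κ : ℝ}

theorem continuous_penalty (ξ p : H) (C κ : ℝ) : Continuous (penalty ξ p C κ) := by
  unfold penalty; fun_prop

theorem penalty_self (ξ p : H) (C κ : ℝ) : penalty ξ p C κ (p, p) = 0 := by simp [penalty]

theorem sub_mem_frechetNormalCone_of_penalty_le_fst (ha : a ∈ Ω₁)
    (h : ∀ᶠ q in 𝓝[Ω₁] a, penalty ξ p C κ (a, b) ≤ penalty ξ p C κ (q, b)) :
    ξ - κ • (a - b) - C • (a - p) ∈ frechetNormalCone Ω₁ a := by
  refine mem_frechetNormalCone_of_inner_le_sq (M := (κ + C) / 2) ha ?_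
  filter_upwards [h] with q hq
  have e₁ : q - p = (a - p) + (q - a) := by abel
  have e₂ : q - b = (a - b) + (q - a) := by abel
  simp only [penalty, e₁, e₂, norm_add_sq_real, inner_add_right] at hq
  rw [inner_sub_left, inner_sub_left, real_inner_smul_left, real_inner_smul_left]
  linarith

theorem smul_mem_frechetNormalCone_of_penalty_le_snd (hb : b ∈ Ω₂)
    (h : ∀ᶠ q in 𝓝[Ω₂] b, penalty ξ p C κ (a, b) ≤ penalty ξ p C κ (a, q)) :
    κ • (a - b) ∈ frechetNormalCone Ω₂ b := by
  refine mem_frechetNormalCone_of_inner_le_sq (M := κ / 2) hb ?_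
  filter_upwards [h] with q hq
  have e : a - q = (a - b) - (q - b) := by abel
  simp only [penalty] at hq
  rw [e, norm_sub_sq_real (a - b)] at hq
  rw [real_inner_smul_left]
  linarith

theorem tendsto_norm_sub_sq_of_penalty_nonpos (hC : 0 ≤ C) {m : ℕ → H × H} {r : ℝ}
    (hm : ∀ k : ℕ, penalty ξ p C k (m k) ≤ 0) (hr : ∀ k, ‖(m k).1 - p‖ ≤ r) :
    Tendsto (fun k => ‖(m k).1 - (m k).2‖ ^ 2) atTop (𝓝 0) := by
  have hbound (k : ℕ) : k * ‖(m k).1 - (m k).2‖ ^ 2 ≤ 2 * (‖ξ‖ * r) := by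
    have h₁ := hm k
    have h₂ : ⟪ξ, (m k).1 - p⟫ ≤ ‖ξ‖ * r :=
      (real_inner_le_norm _ _).trans (mul_le_mul_of_nonneg_left (hr k) (norm_nonneg _))
    simp only [penalty] at h₁
    nlinarith [sq_nonneg ‖(m k).1 - p‖]
  refine squeeze_zero' (Eventually.of_forall fun k => by positivity) ?_
    (tendsto_const_div_atTop_nhds_zero_nat (2 * (‖ξ‖ * r)))
  filter_upwards [eventually_gt_atTop 0] with k hk
  rw [le_div_iff₀ (by positivity)]
  linarith [hbound k]

theorem inner_ge_of_penalty_nonpos_of_tendsto {m : ℕ → H × H} {κ : ℕ → ℝ} (hκ : ∀ j, 0 ≤ κ j)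
    (hm : ∀ j, penalty ξ p C (κ j) (m j) ≤ 0) {z : H × H} (hz : Tendsto m atTop (𝓝 z)) :
    C / 2 * ‖z.1 - p‖ ^ 2 ≤ ⟪ξ, z.1 - p⟫ := by
  have hc : Continuous fun w : H × H => C / 2 * ‖w.1 - p‖ ^ 2 - ⟪ξ, w.1 - p⟫ := by fun_prop
  refine sub_nonpos.1 (le_of_tendsto' ((hc.tendsto z).comp hz) fun j => ?_)
  have hpen := hm j
  have hκj : 0 ≤ κ j / 2 * ‖(m j).1 - (m j).2‖ ^ 2 := by have := hκ j; positivity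
  simp only [penalty] at hpen
  simp only [Function.comp_apply]
  linarith

variable [ProperSpace H]

theorem exists_isMinOn_penalty_near (hΩ₁ : IsClosed Ω₁) (hΩ₂ : IsClosed Ω₂)
    (hp : p ∈ Ω₁ ∩ Ω₂) {r : ℝ} (hr : 0 < r) (hC : 0 < C)
    (hξ : ∀ q ∈ Ω₁ ∩ Ω₂ ∩ closedBall p r, ⟪ξ, q - p⟫ ≤ C * r / 8 * ‖q - p‖) :
    ∃ (κ : ℝ) (a b : H),
      IsMinOn (penalty ξ p C κ) ((Ω₁ ∩ closedBall p r) ×ˢ (Ω₂ ∩ closedBall p r)) (a, b) ∧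
      a ∈ Ω₁ ∧ b ∈ Ω₂ ∧ ‖a - p‖ < r / 2 ∧ ‖b - p‖ < r / 2 := by
  set K := (Ω₁ ∩ closedBall p r) ×ˢ (Ω₂ ∩ closedBall p r)
  have hK : IsCompact K :=
    ((isCompact_closedBall p r).inter_left hΩ₁).prod ((isCompact_closedBall p r).inter_left hΩ₂)
  have hpK : (p, p) ∈ K :=
    ⟨⟨hp.1, mem_closedBall_self hr.le⟩, hp.2, mem_closedBall_self hr.le⟩
  choose m hmK hmin using fun k : ℕ =>
    hK.exists_isMinOn ⟨_, hpK⟩ (continuous_penalty ξ p C k).continuousOn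
  have hneg (k : ℕ) : penalty ξ p C k (m k) ≤ 0 := penalty_self ξ p C k ▸ hmin k hpK
  have hdiag := tendsto_norm_sub_sq_of_penalty_nonpos hC.le hneg fun k =>
    mem_closedBall_iff_norm.1 (hmK k).1.2
  -- As `κ → ∞` the minimizers approach the diagonal, so a cluster point `z` lies on it, in
  -- `Ω₁ ∩ Ω₂`, and the normal inequality at `p` keeps it within `r / 4` of `p`.
  obtain ⟨z, hzK, σ, hσ, hlim⟩ := hK.tendsto_subseq hmK
  have hz : z.1 = z.2 := by
    have h : Tendsto (fun j => ‖(m (σ j)).1 - (m (σ j)).2‖ ^ 2) atTop (𝓝 (‖z.1 - z.2‖ ^ 2)) :=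
      (((continuous_fst.sub continuous_snd).norm.pow 2).tendsto z).comp hlim
    have := tendsto_nhds_unique h (hdiag.comp hσ.tendsto_atTop)
    simpa [sub_eq_zero] using this
  have hzp : ‖z.1 - p‖ ≤ r / 4 := by
    have hlimit := inner_ge_of_penalty_nonpos_of_tendsto (fun j => (σ j).cast_nonneg)
      (fun j => hneg (σ j)) hlim
    have := hξ _ ⟨⟨hzK.1.1, hz ▸ hzK.2.1⟩, hzK.1.2⟩
    by_contra! h
    nlinarith [mul_pos (mul_pos hC (hr.trans_le (by linarith : r ≤ 4 * ‖z.1 - p‖))) (sub_pos.2 h)]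
  obtain ⟨j, hj⟩ := (Metric.tendsto_atTop.1 hlim) (r / 4) (by positivity)
  have hjz : ‖m (σ j) - z‖ < r / 4 := by simpa [dist_eq_norm] using hj j le_rfl
  refine ⟨σ j, (m (σ j)).1, (m (σ j)).2, hmin _, (hmK _).1.1, (hmK _).2.1, ?_, ?_⟩
  · calc ‖(m (σ j)).1 - p‖ ≤ ‖(m (σ j) - z).1‖ + ‖z.1 - p‖ := by
          simpa using norm_sub_le_norm_sub_add_norm_sub (m (σ j)).1 z.1 p
      _ < r / 2 := by linarith [norm_fst_le (m (σ j) - z)]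
  · calc ‖(m (σ j)).2 - p‖ ≤ ‖(m (σ j) - z).2‖ + ‖z.1 - p‖ := by
          simpa [hz] using norm_sub_le_norm_sub_add_norm_sub (m (σ j)).2 z.2 p
      _ < r / 2 := by linarith [norm_snd_le (m (σ j) - z)]

theorem exists_frechetNormalCone_inter_approx (hΩ₁ : IsClosed Ω₁) (hΩ₂ : IsClosed Ω₂)
    (hξ : ξ ∈ frechetNormalCone (Ω₁ ∩ Ω₂) p) {ε : ℝ} (hε : 0 < ε) :
    ∃ p₁ p₂ ξ₁ ξ₂ : H, ξ₁ ∈ frechetNormalCone Ω₁ p₁ ∧ ξ₂ ∈ frechetNormalCone Ω₂ p₂ ∧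
      ‖p₁ - p‖ ≤ ε ∧ ‖p₂ - p‖ ≤ ε ∧ ‖ξ₁ + ξ₂ - ξ‖ ≤ ε := by
  obtain ⟨δ, hδ, hball⟩ := Metric.mem_nhdsWithin_iff.1 (hξ.2 (ε / 4) (by positivity))
  set r := min (δ / 2) ε
  have hr : 0 < r := lt_min (by positivity) hε
  have hrδ : r < δ := (min_le_left _ _).trans_lt (by linarith)
  -- `C * r / 8 = ε / 4`, and `‖a - p‖ < r / 2` gives `‖C • (a - p)‖ < ε`.
  set C := 2 * ε / r
  have hC : 0 < C := by positivity
  have hCr : C * r = 2 * ε := div_mul_cancel₀ _ hr.ne'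
  have hξr : ∀ q ∈ Ω₁ ∩ Ω₂ ∩ closedBall p r, ⟪ξ, q - p⟫ ≤ C * r / 8 * ‖q - p‖ := by
    rintro q ⟨hq, hqr⟩
    rw [hCr, show 2 * ε / 8 = ε / 4 by ring]
    exact hball ⟨closedBall_subset_ball hrδ hqr, hq⟩
  obtain ⟨κ, a, b, hmin, ha, hb, hap, hbp⟩ :=
    exists_isMinOn_penalty_near hΩ₁ hΩ₂ hξ.1 hr hC hξr
  have hab : a ∈ ball p r ∧ b ∈ ball p r := by
    simp only [mem_ball_iff_norm]; constructor <;> linarith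
  refine ⟨a, b, ξ - κ • (a - b) - C • (a - p), κ • (a - b), ?_, ?_, ?_, ?_, ?_⟩
  · refine sub_mem_frechetNormalCone_of_penalty_le_fst ha ?_
    filter_upwards [self_mem_nhdsWithin, nhdsWithin_le_nhds (isOpen_ball.mem_nhds hab.1)]
      with q hq hqr
    exact hmin ⟨⟨hq, ball_subset_closedBall hqr⟩, hb, ball_subset_closedBall hab.2⟩
  · refine smul_mem_frechetNormalCone_of_penalty_le_snd (ξ := ξ) (p := p) (C := C) hb ?_
    filter_upwards [self_mem_nhdsWithin, nhdsWithin_le_nhds (isOpen_ball.mem_nhds hab.2)]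
      with q hq hqr
    exact hmin ⟨⟨ha, ball_subset_closedBall hab.1⟩, hq, ball_subset_closedBall hqr⟩
  · linarith [min_le_right (δ / 2) ε]
  · linarith [min_le_right (δ / 2) ε]
  · rw [show ξ - κ • (a - b) - C • (a - p) + κ • (a - b) - ξ = -(C • (a - p)) by abel,
      norm_neg, norm_smul, Real.norm_of_nonneg hC.le]
    nlinarith

end FuzzyIntersection

theorem WithLp.prod_norm_le_norm_fst_add_norm_snd {α β : Type*} [SeminormedAddCommGroup α]
    [SeminormedAddCommGroup β] (w : WithLp 2 (α × β)) : ‖w‖ ≤ ‖w.fst‖ + ‖w.snd‖ := by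
  rw [WithLp.prod_norm_eq_of_L2, Real.sqrt_le_left] <;>
    nlinarith [norm_nonneg w.fst, norm_nonneg w.snd]

section SumGraph

open WithLp (toLp)

abbrev L2Triple (E F : Type*) [NormedAddCommGroup E] [InnerProductSpace ℝ E]
    [NormedAddCommGroup F] [InnerProductSpace ℝ F] :=
  WithLp 2 (E × WithLp 2 (F × F))

def svGraphFst (S : E → Set F) : Set (L2Triple E F) := {q | q.snd.fst ∈ S q.fst}

def svGraphSnd (S : E → Set F) : Set (L2Triple E F) := {q | q.snd.snd ∈ S q.fst}

variable {S S₁ S₂ : E → Set F}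

theorem L2Triple.norm_fst_le (w : L2Triple E F) : ‖w.fst‖ ≤ ‖w‖ := WithLp.norm_fst_le _ w

theorem L2Triple.norm_snd_fst_le (w : L2Triple E F) : ‖w.snd.fst‖ ≤ ‖w‖ :=
  (WithLp.norm_fst_le _ _).trans (WithLp.norm_snd_le _ w)

theorem L2Triple.norm_snd_snd_le (w : L2Triple E F) : ‖w.snd.snd‖ ≤ ‖w‖ :=
  (WithLp.norm_snd_le _ _).trans (WithLp.norm_snd_le _ w)

theorem isClosed_svGraphFst (h : IsClosed (svGraph S)) : IsClosed (svGraphFst S) :=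
  h.preimage (by fun_prop : Continuous fun q : L2Triple E F => (q.fst, q.snd.fst))

theorem isClosed_svGraphSnd (h : IsClosed (svGraph S)) : IsClosed (svGraphSnd S) :=
  h.preimage (by fun_prop : Continuous fun q : L2Triple E F => (q.fst, q.snd.snd))

theorem mem_frechetNormalCone_svGraphFst_inter_svGraphSnd {x : E} {y₁ y₂ : F}
    (hy₁ : y₁ ∈ S₁ x) (hy₂ : y₂ ∈ S₂ x) {ξ : E × F}
    (hξ : ξ ∈ frechetNormalCone2 (svGraph fun x => S₁ x + S₂ x) (x, y₁ + y₂)) :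
    toLp 2 (ξ.1, toLp 2 (ξ.2, ξ.2)) ∈
      frechetNormalCone (svGraphFst S₁ ∩ svGraphSnd S₂) (toLp 2 (x, toLp 2 (y₁, y₂))) := by
  refine ⟨⟨hy₁, hy₂⟩, (mem_frechetNormalCone2_iff.1 hξ).2.comp
    (g := fun q : L2Triple E F => (q.fst, q.snd.fst + q.snd.snd)) (C := 2)
    (fun q hq => Set.add_mem_add hq.1 hq.2) (fun q => ?_) (fun q => ?_)⟩
  · set w := q - toLp 2 (x, toLp 2 (y₁, y₂))
    have hw : (q.fst, q.snd.fst + q.snd.snd) - (x, y₁ + y₂) = (w.fst, w.snd.fst + w.snd.snd) := by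
      simp [w, add_sub_add_comm]
    simp only [WithLp.toLp_fst, WithLp.toLp_snd]
    rw [hw, norm_prod_le_iff]
    have := norm_add_le w.snd.fst w.snd.snd
    exact ⟨by linarith [L2Triple.norm_fst_le w, norm_nonneg w],
      by linarith [L2Triple.norm_snd_fst_le w, L2Triple.norm_snd_snd_le w]⟩
  · simp [inner_add_right, inner_sub_right]
    ring

variable {q ζ : L2Triple E F}

theorem mem_frechetNormalCone2_svGraph_of_svGraphFst
    (hζ : ζ ∈ frechetNormalCone (svGraphFst S) q) :
    (ζ.fst, ζ.snd.fst) ∈ frechetNormalCone2 (svGraph S) (q.fst, q.snd.fst) := by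
  refine mem_frechetNormalCone2_iff.2 ⟨hζ.1, IsFrechetNormalAt.comp (p := (q.fst, q.snd.fst))
    (g := fun z : E × F => toLp 2 (z.1, toLp 2 (z.2, q.snd.snd))) (C := 2) hζ.2
    (fun z hz => hz) (fun z => ?_) (fun z => ?_)⟩
  · refine (WithLp.prod_norm_le_norm_fst_add_norm_snd _).trans ?_
    have h₁ := norm_fst_le (z - (q.fst, q.snd.fst))
    have h₂ := norm_snd_le (z - (q.fst, q.snd.fst))
    simp only [Prod.fst_sub, Prod.snd_sub] at h₁ h₂
    simp only [WithLp.toLp_fst, WithLp.toLp_snd, ← WithLp.toLp_sub,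
      Prod.mk_sub_mk, sub_self, WithLp.norm_toLp_fst]
    linarith
  · simp

theorem snd_snd_eq_zero_of_mem_frechetNormalCone_svGraphFst
    (hζ : ζ ∈ frechetNormalCone (svGraphFst S) q) : ζ.snd.snd = 0 := by
  have := inner_eq_zero_of_mem_frechetNormalCone hζ
    (d := toLp 2 (0, toLp 2 (0, ζ.snd.snd))) fun t => by simpa [svGraphFst] using hζ.1
  simpa using this

theorem mem_frechetNormalCone2_svGraph_of_svGraphSnd
    (hζ : ζ ∈ frechetNormalCone (svGraphSnd S) q) :
    (ζ.fst, ζ.snd.snd) ∈ frechetNormalCone2 (svGraph S) (q.fst, q.snd.snd) := by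
  refine mem_frechetNormalCone2_iff.2 ⟨hζ.1, IsFrechetNormalAt.comp (p := (q.fst, q.snd.snd))
    (g := fun z : E × F => toLp 2 (z.1, toLp 2 (q.snd.fst, z.2))) (C := 2) hζ.2
    (fun z hz => hz) (fun z => ?_) (fun z => ?_)⟩
  · refine (WithLp.prod_norm_le_norm_fst_add_norm_snd _).trans ?_
    have h₁ := norm_fst_le (z - (q.fst, q.snd.snd))
    have h₂ := norm_snd_le (z - (q.fst, q.snd.snd))
    simp only [Prod.fst_sub, Prod.snd_sub] at h₁ h₂
    simp only [WithLp.toLp_fst, WithLp.toLp_snd, ← WithLp.toLp_sub,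
      Prod.mk_sub_mk, sub_self, WithLp.norm_toLp_snd]
    linarith
  · simp

theorem snd_fst_eq_zero_of_mem_frechetNormalCone_svGraphSnd
    (hζ : ζ ∈ frechetNormalCone (svGraphSnd S) q) : ζ.snd.fst = 0 := by
  have := inner_eq_zero_of_mem_frechetNormalCone hζ
    (d := toLp 2 (0, toLp 2 (ζ.snd.fst, 0))) fun t => by simpa [svGraphSnd] using hζ.1
  simpa using this

theorem exists_frechetNormalCone2_svGraph_add_approx [FiniteDimensional ℝ E]
    [FiniteDimensional ℝ F] (h₁ : IsClosed (svGraph S₁)) (h₂ : IsClosed (svGraph S₂))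
    {x : E} {y₁ y₂ : F} (hy₁ : y₁ ∈ S₁ x) (hy₂ : y₂ ∈ S₂ x) {ξ : E × F}
    (hξ : ξ ∈ frechetNormalCone2 (svGraph fun x => S₁ x + S₂ x) (x, y₁ + y₂))
    {ε : ℝ} (hε : 0 < ε) :
    ∃ p₁ η₁ p₂ η₂ : E × F, η₁ ∈ frechetNormalCone2 (svGraph S₁) p₁ ∧
      η₂ ∈ frechetNormalCone2 (svGraph S₂) p₂ ∧ ‖p₁ - (x, y₁)‖ ≤ ε ∧ ‖p₂ - (x, y₂)‖ ≤ ε ∧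
      ‖η₁.1 + η₂.1 - ξ.1‖ ≤ ε ∧ ‖η₁.2 - ξ.2‖ ≤ ε ∧ ‖η₂.2 - ξ.2‖ ≤ ε := by
  obtain ⟨q₁, q₂, ζ₁, ζ₂, hζ₁, hζ₂, hq₁, hq₂, hζ⟩ :=
    exists_frechetNormalCone_inter_approx (isClosed_svGraphFst h₁) (isClosed_svGraphSnd h₂)
      (mem_frechetNormalCone_svGraphFst_inter_svGraphSnd hy₁ hy₂ hξ) hε
  have hζ₁₂ := snd_snd_eq_zero_of_mem_frechetNormalCone_svGraphFst hζ₁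
  have hζ₂₁ := snd_fst_eq_zero_of_mem_frechetNormalCone_svGraphSnd hζ₂
  refine ⟨_, _, _, _, mem_frechetNormalCone2_svGraph_of_svGraphFst hζ₁,
    mem_frechetNormalCone2_svGraph_of_svGraphSnd hζ₂, norm_prod_le_iff.2 ⟨?_, ?_⟩,
    norm_prod_le_iff.2 ⟨?_, ?_⟩, ?_, ?_, ?_⟩
  · simpa using (L2Triple.norm_fst_le _).trans hq₁
  · simpa using (L2Triple.norm_snd_fst_le _).trans hq₁
  · simpa using (L2Triple.norm_fst_le _).trans hq₂
  · simpa using (L2Triple.norm_snd_snd_le _).trans hq₂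
  · simpa using (L2Triple.norm_fst_le _).trans hζ
  · simpa [hζ₂₁] using (L2Triple.norm_snd_fst_le _).trans hζ
  · simpa [hζ₁₂] using (L2Triple.norm_snd_snd_le _).trans hζ

end SumGraph

section AtInfty

theorem smul_mem_frechetNormalCone2 {Ω : Set (E × F)} {p ξ : E × F}
    (h : ξ ∈ frechetNormalCone2 Ω p) {c : ℝ} (hc : 0 < c) : c • ξ ∈ frechetNormalCone2 Ω p := by
  refine ⟨h.1, fun ε hε => ?_⟩
  filter_upwards [h.2 (ε / c) (by positivity)] with q hq
  simp only [Prod.smul_fst, Prod.smul_snd, real_inner_smul_left, ← mul_add]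
  calc c * (⟪ξ.1, q.1 - p.1⟫ + ⟪ξ.2, q.2 - p.2⟫) ≤ c * (ε / c * ‖q - p‖) := by gcongr
    _ = ε * ‖q - p‖ := by field_simp

def IsFrechetNormalSeqAtInfty (Ω : Set (E × F)) (y : F) (P N : ℕ → E × F) : Prop :=
  (∀ j, N j ∈ frechetNormalCone2 Ω (P j)) ∧ Tendsto (fun j => ‖(P j).1‖) atTop atTop ∧
    Tendsto (fun j => (P j).2) atTop (𝓝 y)

namespace IsFrechetNormalSeqAtInfty

variable {Ω : Set (E × F)} {y : F} {P N : ℕ → E × F}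

theorem comp (h : IsFrechetNormalSeqAtInfty Ω y P N) {θ : ℕ → ℕ}
    (hθ : Tendsto θ atTop atTop) :
    IsFrechetNormalSeqAtInfty Ω y (fun i => P (θ i)) (fun i => N (θ i)) :=
  ⟨fun i => h.1 (θ i), h.2.1.comp hθ, h.2.2.comp hθ⟩

theorem mem_normalConeAtInfty_of_tendsto_smul (h : IsFrechetNormalSeqAtInfty Ω y P N)
    {c : ℕ → ℝ} (hc : ∀ j, 0 < c j) {ζ : E × F}
    (hζ : Tendsto (fun j => c j • N j) atTop (𝓝 ζ)) : ζ ∈ normalConeAtInfty Ω y :=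
  ⟨P, fun j => c j • N j, fun j => (h.1 j).1, h.2.1, h.2.2,
    fun j => smul_mem_frechetNormalCone2 (h.1 j) (hc j), hζ⟩

theorem mem_normalConeAtInfty (h : IsFrechetNormalSeqAtInfty Ω y P N) {ζ : E × F}
    (hζ : Tendsto N atTop (𝓝 ζ)) : ζ ∈ normalConeAtInfty Ω y :=
  ⟨P, N, fun j => (h.1 j).1, h.2.1, h.2.2, h.1, hζ⟩

end IsFrechetNormalSeqAtInfty

variable {S₁ S₂ : E → Set F} {y₁ y₂ : F} {P₁ P₂ N₁ N₂ : ℕ → E × F}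

theorem mem_coderivAtInfty_zero_inter_neg_of_tendsto_smul
    (h₁ : IsFrechetNormalSeqAtInfty (svGraph S₁) y₁ P₁ N₁)
    (h₂ : IsFrechetNormalSeqAtInfty (svGraph S₂) y₂ P₂ N₂) {u : E} {w : F}
    (hN₁ : Tendsto (fun j => (N₁ j).2) atTop (𝓝 w)) (hN₂ : Tendsto (fun j => (N₂ j).2) atTop (𝓝 w))
    (hN : Tendsto (fun j => (N₁ j).1 + (N₂ j).1) atTop (𝓝 u))
    {t : ℕ → ℝ} (ht : ∀ j, 0 < t j) (ht0 : Tendsto t atTop (𝓝 0)) {η : E}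
    (hη : Tendsto (fun j => t j • (N₁ j).1) atTop (𝓝 η)) :
    η ∈ coderivAtInfty S₁ y₁ 0 ∩ -coderivAtInfty S₂ y₂ 0 := by
  refine ⟨h₁.mem_normalConeAtInfty_of_tendsto_smul ht ?_, ?_⟩
  · have hv := ht0.smul hN₁
    rw [zero_smul, ← neg_zero] at hv
    exact hη.prodMk_nhds hv
  · have hη₂ : Tendsto (fun j => t j • (N₂ j).1) atTop (𝓝 (-η)) := by
      simpa [smul_add] using (ht0.smul hN).sub hη
    have hv := ht0.smul hN₂
    rw [zero_smul, ← neg_zero] at hv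
    exact h₂.mem_normalConeAtInfty_of_tendsto_smul ht (hη₂.prodMk_nhds hv)

theorem mem_coderivAtInfty_add_of_tendsto [FiniteDimensional ℝ E]
    (hcq : coderivAtInfty S₁ y₁ 0 ∩ -coderivAtInfty S₂ y₂ 0 = {0})
    (h₁ : IsFrechetNormalSeqAtInfty (svGraph S₁) y₁ P₁ N₁)
    (h₂ : IsFrechetNormalSeqAtInfty (svGraph S₂) y₂ P₂ N₂) {u : E} {v : F}
    (hN₁ : Tendsto (fun j => (N₁ j).2) atTop (𝓝 (-v)))
    (hN₂ : Tendsto (fun j => (N₂ j).2) atTop (𝓝 (-v)))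
    (hN : Tendsto (fun j => (N₁ j).1 + (N₂ j).1) atTop (𝓝 u)) :
    u ∈ coderivAtInfty S₁ y₁ v + coderivAtInfty S₂ y₂ v := by
  -- `t j • (N₁ j).1` lies in the unit ball; `t → 0` along a subsequence would violate `hcq`.
  set t : ℕ → ℝ := fun j => (1 + ‖(N₁ j).1‖)⁻¹
  have ht (j : ℕ) : 0 < t j := by positivity
  have htN (j : ℕ) : ‖t j • (N₁ j).1‖ = 1 - t j := by
    rw [norm_smul, Real.norm_of_nonneg (ht j).le]
    simp only [t]
    field_simp
    ring
  have hmem (j : ℕ) : (t j • (N₁ j).1, t j) ∈ closedBall (0 : E × ℝ) 1 := by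
    rw [mem_closedBall_zero_iff, norm_prod_le_iff, htN, Real.norm_of_nonneg (ht j).le]
    exact ⟨by linarith [ht j], inv_le_one_of_one_le₀ (by simp)⟩
  obtain ⟨⟨η, c⟩, -, θ, hθ, hlim⟩ := (isCompact_closedBall _ _).tendsto_subseq hmem
  have hθ' := hθ.tendsto_atTop
  have hη : Tendsto (fun i => t (θ i) • (N₁ (θ i)).1) atTop (𝓝 η) :=
    (continuous_fst.tendsto _).comp hlim
  have hc : Tendsto (fun i => t (θ i)) atTop (𝓝 c) := (continuous_snd.tendsto _).comp hlim
  have hc0 : c ≠ 0 := by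
    rintro rfl
    have hη0 : η = 0 := by
      rw [← mem_singleton_iff, ← hcq]
      exact mem_coderivAtInfty_zero_inter_neg_of_tendsto_smul (h₁.comp hθ') (h₂.comp hθ')
        (hN₁.comp hθ') (hN₂.comp hθ') (hN.comp hθ') (fun i => ht (θ i)) hc hη
    have hη1 : Tendsto (fun i => ‖t (θ i) • (N₁ (θ i)).1‖) atTop (𝓝 1) := by
      simpa [htN] using (tendsto_const_nhds (x := (1:ℝ))).sub hc
    simpa [hη0] using tendsto_nhds_unique hη.norm hη1
  have hN₁u : Tendsto (fun i => (N₁ (θ i)).1) atTop (𝓝 (c⁻¹ • η)) :=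
    ((hc.inv₀ hc0).smul hη).congr fun i => inv_smul_smul₀ (ht (θ i)).ne' _
  refine ⟨c⁻¹ • η, (h₁.comp hθ').mem_normalConeAtInfty (hN₁u.prodMk_nhds (hN₁.comp hθ')),
    u - c⁻¹ • η, (h₂.comp hθ').mem_normalConeAtInfty ?_, add_sub_cancel _ _⟩
  refine Tendsto.prodMk_nhds ?_ (hN₂.comp hθ')
  simpa using (hN.comp hθ').sub hN₁u

end AtInfty

section SumRule

variable {S₁ S₂ : E → Set F} {y₁ y₂ : F}

theorem mem_coderivAtInfty_add_of_frechetNormalCone2_svGraph_add [FiniteDimensional ℝ E]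
    [FiniteDimensional ℝ F] (h₁ : IsClosed (svGraph S₁)) (h₂ : IsClosed (svGraph S₂))
    (hcq : coderivAtInfty S₁ y₁ 0 ∩ -coderivAtInfty S₂ y₂ 0 = {0})
    {x : ℕ → E} {A B : ℕ → F} (hA : ∀ j, A j ∈ S₁ (x j)) (hB : ∀ j, B j ∈ S₂ (x j))
    (hx : Tendsto (fun j => ‖x j‖) atTop atTop) (hA' : Tendsto A atTop (𝓝 y₁))
    (hB' : Tendsto B atTop (𝓝 y₂)) {ξ : ℕ → E × F}
    (hξ : ∀ j, ξ j ∈ frechetNormalCone2 (svGraph fun x => S₁ x + S₂ x) (x j, A j + B j))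
    {u : E} {v : F} (hξ' : Tendsto ξ atTop (𝓝 (u, -v))) :
    u ∈ coderivAtInfty S₁ y₁ v + coderivAtInfty S₂ y₂ v := by
  choose P₁ N₁ P₂ N₂ hN₁ hN₂ hP₁ hP₂ hN hN₁v hN₂v using fun j : ℕ =>
    exists_frechetNormalCone2_svGraph_add_approx h₁ h₂ (hA j) (hB j) (hξ j)
      (Nat.one_div_pos_of_nat (n := j))
  have hε : Tendsto (fun j : ℕ => 1 / ((j : ℝ) + 1)) atTop (𝓝 0) :=
    tendsto_one_div_add_atTop_nhds_zero_nat
  have hfst (P : ℕ → E × F) (y : ℕ → F) (hP : ∀ j, ‖P j - (x j, y j)‖ ≤ 1 / ((j : ℝ) + 1)) :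
      Tendsto (fun j => ‖(P j).1‖) atTop atTop :=
    tendsto_norm_atTop_of_norm_sub_le (fun j => (norm_fst_le _).trans (hP j)) hε hx
  have hsnd (P : ℕ → E × F) (y : ℕ → F) (hP : ∀ j, ‖P j - (x j, y j)‖ ≤ 1 / ((j : ℝ) + 1))
      {z : F} (hy : Tendsto y atTop (𝓝 z)) : Tendsto (fun j => (P j).2) atTop (𝓝 z) :=
    tendsto_of_norm_sub_le (fun j => (norm_snd_le _).trans (hP j)) hε hy
  exact mem_coderivAtInfty_add_of_tendsto hcq
    ⟨hN₁, hfst _ _ hP₁, hsnd _ _ hP₁ hA'⟩ ⟨hN₂, hfst _ _ hP₂, hsnd _ _ hP₂ hB'⟩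
    (tendsto_of_norm_sub_le hN₁v hε hξ'.snd_nhds) (tendsto_of_norm_sub_le hN₂v hε hξ'.snd_nhds)
    (tendsto_of_norm_sub_le hN hε hξ'.fst_nhds)

end SumRule

theorem stmt3_general {n m : ℕ} (S₁ S₂ : Eucl n → Set (Eucl m))
    (h₁ : IsClosed (svGraph S₁)) (h₂ : IsClosed (svGraph S₂))
    (ybar : Eucl m)
    (hbdd : ∃ R > (0:ℝ), ∃ ρ > (0:ℝ), ∃ V ∈ 𝓝 ybar,
      ∀ (x : Eucl n) (y₁ y₂ : Eucl m), R < ‖x‖ → y₁ ∈ S₁ x → y₂ ∈ S₂ x →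
        y₁ + y₂ ∈ V → ‖y₁‖ < ρ ∧ ‖y₂‖ < ρ)
    (hcq : ∀ q ∈ jplus S₁ S₂ ybar,
      coderivAtInfty S₁ q.1 0 ∩ (-(coderivAtInfty S₂ q.2 0)) = ({0} : Set (Eucl n))) :
    LocallyClosedAtInfty (svGraph (fun x => S₁ x + S₂ x)) ybar ∧
      ∀ v : Eucl m, coderivAtInfty (fun x => S₁ x + S₂ x) ybar v ⊆
        ⋃ q ∈ jplus S₁ S₂ ybar,
          (coderivAtInfty S₁ q.1 v + coderivAtInfty S₂ q.2 v) := by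
  obtain ⟨R, -, ρ, -, V, hV, hbdd⟩ := hbdd
  refine ⟨locallyClosedAtInfty_svGraph_add h₁ h₂ hV hbdd, fun v u hu => ?_⟩
  obtain ⟨p, ξ, hp, hpx, hpy, hξ, hξu⟩ := hu
  choose A hA B hB hAB using fun k => Set.mem_add.1 (hp k)
  obtain ⟨⟨y₁, y₂⟩, φ, hφ, hy⟩ := exists_subseq_tendsto_of_add_mem hbdd hA hB
    (((hpx.eventually_gt_atTop R).and (hpy.eventually_mem hV)).mono fun k hk =>
      ⟨hk.1, (hAB k).symm ▸ hk.2⟩)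
  have hφ' := hφ.tendsto_atTop
  have hjp : (y₁, y₂) ∈ jplus S₁ S₂ ybar :=
    ⟨fun i => (p (φ i)).1, _, _, hpx.comp hφ', fun i => hA _, fun i => hB _, hy.fst_nhds,
      hy.snd_nhds,
      tendsto_nhds_unique ((hy.fst_nhds.add hy.snd_nhds).congr fun i => hAB _) (hpy.comp hφ')⟩
  refine mem_iUnion₂.2 ⟨_, hjp, mem_coderivAtInfty_add_of_frechetNormalCone2_svGraph_add h₁ h₂
    (hcq _ hjp) (fun i => hA (φ i)) (fun i => hB (φ i)) (hpx.comp hφ') hy.fst_nhds hy.snd_nhds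
    (fun i => ?_) (hξu.comp hφ')⟩
  rw [hAB]
  exact hξ _

/-- Sum rule at infinity for coderivatives. -/
theorem stmt3 {n m : ℕ} (S₁ S₂ : Eucl n → Set (Eucl m))
    (h₁ : IsClosed (svGraph S₁)) (h₂ : IsClosed (svGraph S₂))
    (ybar : Eucl m) (hJ : ybar ∈ jelonek (fun x => S₁ x + S₂ x))
    (hbdd : ∃ R > (0:ℝ), ∃ ρ > (0:ℝ), ∃ V ∈ 𝓝 ybar,
      ∀ (x : Eucl n) (y₁ y₂ : Eucl m), R < ‖x‖ → y₁ ∈ S₁ x → y₂ ∈ S₂ x →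
        y₁ + y₂ ∈ V → ‖y₁‖ < ρ ∧ ‖y₂‖ < ρ)
    (hcq : ∀ q ∈ jplus S₁ S₂ ybar,
      coderivAtInfty S₁ q.1 0 ∩ (-(coderivAtInfty S₂ q.2 0)) = ({0} : Set (Eucl n))) :
    LocallyClosedAtInfty (svGraph (fun x => S₁ x + S₂ x)) ybar ∧
      ∀ v : Eucl m, coderivAtInfty (fun x => S₁ x + S₂ x) ybar v ⊆
        ⋃ q ∈ jplus S₁ S₂ ybar,
          (coderivAtInfty S₁ q.1 v + coderivAtInfty S₂ q.2 v) :=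
  stmt3_general S₁ S₂ h₁ h₂ ybar hbdd hcq
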